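/- Let α > 0, δ ≥ 0, δ̃ ≥ 0, let x_k ∈ Q and x_{k+1} ∈ Q, let F : Q → ℝ, let F₀ ∈ ℝ and ψ : E → ℝ convex on Q with: (i) F₀ + ψ(x) ≤ F(x) for all x ∈ Q (left model inequality at x_k); (ii) F(x_{k+1}) ≤ F₀ + ψ(x_{k+1}) + (1/(2α))‖x_{k+1} − x_k‖² + 2δ (accepted step condition combined with the model upper bound); (iii) V(x,y) ≥ (1/2)‖x − y‖² for all x, y ∈ Q; (iv) there exists a subgradient g of x ↦ α·ψ(x) at x_{k+1} on Q with (g + d′(x_{k+1}) − d′(x_k))(x − x_{k+1}) ≥ −δ̃ for all x ∈ Q (x_{k+1} is a δ̃-approximate minimizer of x ↦ V(x,x_k) + α·ψ(x) over Q in the sense of Definition 4). Then for all x ∈ Q: α·F(x_{k+1}) − α·F(x) ≤ V(x,x_k) − V(x,x_{k+1}) + δ̃ + 2δα. -/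

import Mathlib

/-!
Multiplying the two model inequalities by `α` bounds `α F(x_{k+1}) - α F(x)` by
`α ψ(x_{k+1}) - α ψ(x) + ½‖x_{k+1} - x_k‖² + 2δα`. The subgradient inequality and the
`δ̃`-optimality condition bound `α ψ(x_{k+1}) - α ψ(x)` by `δ̃ + (d'(x_{k+1}) - d'(x_k))(x - x_{k+1})`,
which by the three-point identity of the Bregman divergence equals
`δ̃ + V(x, x_k) - V(x, x_{k+1}) - V(x_{k+1}, x_k)`; finally `V(x_{k+1}, x_k)` absorbs the
quadratic term.
-/

section Bregman

variable {E : Type*} [AddCommGroup E] [Module ℝ E] [TopologicalSpace E]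

def bregmanDiv (d : E → ℝ) (d' : E → E →L[ℝ] ℝ) (x y : E) : ℝ :=
  d x - d y - d' y (x - y)

theorem bregmanDiv_three_point (d : E → ℝ) (d' : E → E →L[ℝ] ℝ) (x y z : E) :
    bregmanDiv d d' x z - bregmanDiv d d' x y - bregmanDiv d d' y z = (d' y - d' z) (x - y) := by
  have hsplit : x - z = (x - y) + (y - z) := by abel
  simp only [bregmanDiv, hsplit, map_add, sub_apply]
  ring

/-- `hsub` and `happrox` say that `x₁` is a `δ̃`-approximate minimizer of
`x ↦ V(x, x₀) + α ψ(x)` over `Q`, certified by the subgradient `g` of `α ψ` at `x₁`. -/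
theorem approx_prox_three_point_ineq (d : E → ℝ) (d' : E → E →L[ℝ] ℝ)
    {Q : Set E} {ψ : E → ℝ} {α δt : ℝ} {x₀ x₁ : E} (g : E →L[ℝ] ℝ)
    (hsub : ∀ x ∈ Q, α * ψ x₁ + g (x - x₁) ≤ α * ψ x)
    (happrox : ∀ x ∈ Q, -δt ≤ g (x - x₁) + d' x₁ (x - x₁) - d' x₀ (x - x₁))
    {x : E} (hx : x ∈ Q) :
    α * ψ x₁ - α * ψ x ≤
      bregmanDiv d d' x x₀ - bregmanDiv d d' x x₁ - bregmanDiv d d' x₁ x₀ + δt := by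
  have hthree := bregmanDiv_three_point d d' x x₁ x₀
  rw [sub_apply] at hthree
  linarith [hsub x hx, happrox x hx]

end Bregman

theorem stmt5_general {E : Type*} [NormedAddCommGroup E] [NormedSpace ℝ E]
    (Q : Set E)
    (d : E → ℝ) (d' : E → (E →L[ℝ] ℝ))
    (V : E → E → ℝ) (hV : ∀ x y, V x y = d x - d y - d' y (x - y))
    (α δ δt : ℝ) (hα : 0 < α)
    (xk xk1 : E) (hxk : xk ∈ Q) (hxk1 : xk1 ∈ Q)
    (F : E → ℝ) (F₀ : ℝ) (ψ : E → ℝ)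
    (hleft : ∀ x ∈ Q, F₀ + ψ x ≤ F x)
    (hstep : F xk1 ≤ F₀ + ψ xk1 + 1 / (2 * α) * ‖xk1 - xk‖ ^ 2 + 2 * δ)
    (hVlow : ∀ x ∈ Q, ∀ y ∈ Q, 1/2 * ‖x - y‖ ^ 2 ≤ V x y)
    (g : E →L[ℝ] ℝ)
    (hsub : ∀ x ∈ Q, α * ψ xk1 + g (x - xk1) ≤ α * ψ x)
    (happrox : ∀ x ∈ Q, -δt ≤ g (x - xk1) + d' xk1 (x - xk1) - d' xk (x - xk1)) :
    ∀ x ∈ Q, α * F xk1 - α * F x ≤ V x xk - V x xk1 + δt + 2 * δ * α := by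
  have hVeq : V = bregmanDiv d d' := by
    ext x y
    exact hV x y
  subst hVeq
  intro x hx
  have hmodel : α * F xk1 - α * F x ≤
      α * ψ xk1 - α * ψ x + 1 / 2 * ‖xk1 - xk‖ ^ 2 + 2 * δ * α := by
    have hleft' := mul_le_mul_of_nonneg_left (hleft x hx) hα.le
    have hstep' := mul_le_mul_of_nonneg_left hstep hα.le
    have hhalf : α * (1 / (2 * α)) = 1 / 2 := by field_simp
    linear_combination hstep' + hleft' + ‖xk1 - xk‖ ^ 2 * hhalf
  linarith [approx_prox_three_point_ineq d d' g hsub happrox hx, hVlow xk1 hxk1 xk hxk]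

/-- The per-iteration inequality of the gradient method with a
`(δ, L)`-model oracle and `δ̃`-inexact auxiliary minimization: under the left
model inequality, the accepted step condition, the strong-convexity lower bound
on the Bregman divergence `V`, and the `δ̃`-approximate optimality of `x_{k+1}`
for `x ↦ V(x, x_k) + α ψ(x)` over `Q`, one has, for all `x ∈ Q`,
`α F(x_{k+1}) − α F(x) ≤ V(x, x_k) − V(x, x_{k+1}) + δ̃ + 2δα`. -/
theorem stmt5 {E : Type*} [NormedAddCommGroup E] [NormedSpace ℝ E]
    (Q : Set E) (hQ : Convex ℝ Q)
    (d : E → ℝ) (d' : E → (E →L[ℝ] ℝ)) (hd : ∀ x, HasFDerivAt d (d' x) x)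
    (V : E → E → ℝ) (hV : ∀ x y, V x y = d x - d y - d' y (x - y))
    (α δ δt : ℝ) (hα : 0 < α) (hδ : 0 ≤ δ) (hδt : 0 ≤ δt)
    (xk xk1 : E) (hxk : xk ∈ Q) (hxk1 : xk1 ∈ Q)
    (F : E → ℝ) (F₀ : ℝ) (ψ : E → ℝ) (hψ : ConvexOn ℝ Q ψ)
    (hleft : ∀ x ∈ Q, F₀ + ψ x ≤ F x)
    (hstep : F xk1 ≤ F₀ + ψ xk1 + 1 / (2 * α) * ‖xk1 - xk‖ ^ 2 + 2 * δ)
    (hVlow : ∀ x ∈ Q, ∀ y ∈ Q, 1/2 * ‖x - y‖ ^ 2 ≤ V x y)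
    (g : E →L[ℝ] ℝ)
    (hsub : ∀ x ∈ Q, α * ψ xk1 + g (x - xk1) ≤ α * ψ x)
    (happrox : ∀ x ∈ Q, -δt ≤ g (x - xk1) + d' xk1 (x - xk1) - d' xk (x - xk1)) :
    ∀ x ∈ Q, α * F xk1 - α * F x ≤ V x xk - V x xk1 + δt + 2 * δ * α :=
  stmt5_general Q d d' V hV α δ δt hα xk xk1 hxk hxk1 F F₀ ψ hleft hstep hVlow g hsub happrox
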